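/- arXiv:1509.09271 — 2 statements merged into one kernel-verified Lean document; each statement's English description precedes it below -/
import Mathlib

section
/- Let q be a prime power, let d be an even positive integer, and let k = d/2 + 1. Let R_k^good denote the image under Z of the set of good pairs, and let N_g := (∏_{i=0}^{k-1}(q-i)) · (q-1)^k. Then (q^{d+1} - |R_k^good|) · N_g² ≤ (d+1)^{d+2} · q^{3d+4}. In particular, for fixed d, |R_k^good|/q^{d+1} = 1 - O(1/q). -/
/-!
Let `N` be the number of good pairs, `S = |R_k^good|`, and `T` the number of pairs of good
pairs with the same image under `Z`. Cauchy–Schwarz over the fibres of `Z` gives `N² ≤ S T`,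
hence `(q^{d+1} - S) N² ≤ q^{d+1} (q^{d+1} T - N²)`, and it remains to show that
`q^{d+1} T - N² = O(q^{2d+3})`.

Read a pair `(x, y)` as the signed measure `∑ᵢ yᵢ δ_{xᵢ}` (`pointMasses x y`). Two pairs with
the same image differ by a measure whose moments of order `0, …, d` vanish, and by Vandermonde
such a measure is zero as soon as it lives on at most `d + 1 = 2k - 1` points. If the two node
sets meet, their union has at most `2k - 1` points, so the second pair is a reindexing of the
first: at most `k^k q^{2k}` collisions. If they are disjoint, two collisions with the same nodes
and the same first weight differ by a measure on `2k - 1` points, so a collision is fixed by the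
nodes and one weight: at most `q^{2k+1}` collisions. Finally `N ≥ (q - k)^{2k}` and Bernoulli's
inequality give `q^{2d+4} ≤ N² + (2d + 4) k q^{2d+3}`.
-/

open Finset Function

namespace Finset

theorem card_sq_le_card_image_mul_card_filter_eq {α β : Type*} [DecidableEq β]
    (s : Finset α) (f : α → β) :
    #s ^ 2 ≤ #(s.image f) * #{p ∈ s ×ˢ s | f p.1 = f p.2} := by
  have hfibers : #{p ∈ s ×ˢ s | f p.1 = f p.2} = ∑ b ∈ s.image f, #{a ∈ s | f a = b} ^ 2 := by
    rw [card_eq_sum_card_fiberwise (f := fun p => f p.1) (t := s.image f)]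
    · refine sum_congr rfl fun b _ => ?_
      rw [sq, ← card_product, filter_filter]
      congr 1
      ext p
      simp only [mem_filter, mem_product]
      grind
    · intro p hp
      exact mem_image_of_mem f (mem_product.1 (mem_filter.1 hp).1).1
  rw [hfibers, card_eq_sum_card_image f s]
  exact sq_sum_le_card_mul_sum_sq

theorem eq_zero_of_sum_mul_pow_eq_zero {R : Type*} [CommRing R] [IsDomain R] {d : ℕ}
    {S : Finset R} (hS : #S ≤ d + 1) {c : R → R} (h : ∀ j ≤ d, ∑ t ∈ S, c t * t ^ j = 0) :
    ∀ t ∈ S, c t = 0 := by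
  set e := S.equivFin
  have hv : (fun i => c (e.symm i)) = 0 := by
    refine Matrix.eq_zero_of_forall_pow_sum_mul_pow_eq_zero
      (f := fun i => (e.symm i : R)) (Subtype.val_injective.comp e.symm.injective) fun i => ?_
    rw [← h i (by omega)]
    exact (e.symm.sum_comp fun t : S => c t * (t : R) ^ (i : ℕ)).trans
      (sum_coe_sort S fun t => c t * t ^ (i : ℕ))
  intro t ht
  simpa using congrFun hv (e ⟨t, ht⟩)

end Finset

section ImageUnion

variable {α : Type*} [DecidableEq α] {k : ℕ}

theorem card_image_union_image_le (x x' : Fin k → α) :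
    #(univ.image x ∪ univ.image x') ≤ 2 * k := by
  have := card_union_le (univ.image x) (univ.image x')
  have := card_image_le (s := univ) (f := x)
  have := card_image_le (s := univ) (f := x')
  simp only [card_univ, Fintype.card_fin] at *
  omega

theorem card_image_union_image_lt {x x' : Fin k → α} (h : ∃ i j, x i = x' j) :
    #(univ.image x ∪ univ.image x') < 2 * k := by
  obtain ⟨i, j, he⟩ := h
  have hinter : 0 < #(univ.image x ∩ univ.image x') :=
    card_pos.2 ⟨x i, mem_inter.2 ⟨mem_image_of_mem x (mem_univ i),
      he ▸ mem_image_of_mem x' (mem_univ j)⟩⟩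
  have := card_union_add_card_inter (univ.image x) (univ.image x')
  have := card_image_le (s := univ) (f := x)
  have := card_image_le (s := univ) (f := x')
  simp only [card_univ, Fintype.card_fin] at *
  omega

end ImageUnion

section PointMasses

variable {R : Type*} [CommRing R] [DecidableEq R] {m n : ℕ}

def pointMasses (x y : Fin m → R) (t : R) : R := ∑ i with x i = t, y i

theorem pointMasses_apply_of_injective {x : Fin m → R} (hx : Injective x) (y : Fin m → R)
    (i : Fin m) : pointMasses x y (x i) = y i := by
  simp [pointMasses, hx.eq_iff, filter_eq']

theorem pointMasses_eq_zero {x : Fin m → R} {t : R} (h : ∀ i, x i ≠ t) (y : Fin m → R) :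
    pointMasses x y t = 0 := by
  simp [pointMasses, h]

theorem sum_pointMasses_mul_pow {x : Fin m → R} {S : Finset R} (hS : ∀ i, x i ∈ S)
    (y : Fin m → R) (j : ℕ) : ∑ t ∈ S, pointMasses x y t * t ^ j = ∑ i, y i * x i ^ j := by
  simp_rw [pointMasses, sum_mul]
  rw [← sum_fiberwise_of_maps_to (g := x) fun i _ => hS i]
  refine sum_congr rfl fun t _ => sum_congr rfl fun i hi => ?_
  rw [(mem_filter.1 hi).2]

theorem pointMasses_eq_of_sum_mul_pow_eq [IsDomain R] {d : ℕ} {x y : Fin m → R}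
    {x' y' : Fin n → R} (S : Finset R) (hS : #S ≤ d + 1)
    (hoff : ∀ t ∉ S, pointMasses x y t = pointMasses x' y' t)
    (h : ∀ j ≤ d, ∑ i, y i * x i ^ j = ∑ i, y' i * x' i ^ j) :
    pointMasses x y = pointMasses x' y' := by
  set U := S ∪ univ.image x ∪ univ.image x'
  have hmoments : ∀ j ≤ d, ∑ t ∈ S, (pointMasses x y t - pointMasses x' y' t) * t ^ j = 0 := by
    intro j hj
    rw [sum_subset (subset_union_left.trans subset_union_left : S ⊆ U)
      fun t _ ht => by rw [hoff t ht, sub_self, zero_mul]]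
    simp_rw [sub_mul, sum_sub_distrib]
    rw [sum_pointMasses_mul_pow (by simp [U]), sum_pointMasses_mul_pow (by simp [U]), h j hj,
      sub_self]
  ext t
  by_cases ht : t ∈ S
  · exact sub_eq_zero.1 (Finset.eq_zero_of_sum_mul_pow_eq_zero hS hmoments t ht)
  · exact hoff t ht

end PointMasses

section MomentMap

variable {R : Type*} [CommRing R] {k d : ℕ}

def momentMap (d : ℕ) (p : (Fin k → R) × (Fin k → R)) : Fin (d + 1) → R :=
  fun j => ∑ i, p.2 i * p.1 i ^ (j : ℕ)

theorem momentMap_eq_iff {x y x' y' : Fin k → R} :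
    momentMap d (x, y) = momentMap d (x', y') ↔
      ∀ j ≤ d, ∑ i, y i * x i ^ j = ∑ i, y' i * x' i ^ j := by
  simp only [funext_iff, momentMap, Fin.forall_iff, Nat.lt_succ_iff]

variable [IsDomain R] [DecidableEq R]

theorem exists_comp_eq_of_momentMap_eq (hk : 2 * k ≤ d + 2) {x y x' y' : Fin k → R}
    (hx : Injective x) (hx' : Injective x') (hy' : ∀ j, y' j ≠ 0) (hov : ∃ i j, x i = x' j)
    (h : momentMap d (x, y) = momentMap d (x', y')) :
    ∃ σ : Fin k → Fin k, x' = x ∘ σ ∧ y' = y ∘ σ := by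
  have hS : #(univ.image x ∪ univ.image x') ≤ d + 1 := by
    have := card_image_union_image_lt hov
    omega
  have heq := pointMasses_eq_of_sum_mul_pow_eq _ hS
    (fun t ht => by
      simp only [mem_union, mem_image, mem_univ, true_and, not_or, not_exists] at ht
      rw [pointMasses_eq_zero ht.1, pointMasses_eq_zero ht.2])
    (momentMap_eq_iff.1 h)
  have hmem : ∀ j, ∃ i, x i = x' j := by
    intro j
    by_contra! hne
    exact hy' j (by rw [← pointMasses_apply_of_injective hx' y' j, ← heq, pointMasses_eq_zero hne])
  choose σ hσ using hmem
  refine ⟨σ, funext fun j => (hσ j).symm, funext fun j => ?_⟩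
  rw [← pointMasses_apply_of_injective hx' y', ← heq, ← hσ j, pointMasses_apply_of_injective hx,
    comp_apply]

theorem eq_of_momentMap_eq_of_disjoint (hk : 2 * k ≤ d + 2) {x y w x' y' w' : Fin k → R}
    (hx : Injective x) (hx' : Injective x') (hdisj : ∀ i j, x i ≠ x' j) {i₀ : Fin k}
    (hi₀ : y i₀ = w i₀) (hy : momentMap d (x, y) = momentMap d (x', y'))
    (hw : momentMap d (x, w) = momentMap d (x', w')) : y = w ∧ y' = w' := by
  set S := (univ.image x ∪ univ.image x').erase (x i₀)
  have hS : #S ≤ d + 1 := by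
    rw [card_erase_of_mem (mem_union_left _ (mem_image_of_mem x (mem_univ i₀)))]
    have := card_image_union_image_le x x'
    omega
  have hoff : ∀ t ∉ S, pointMasses x (y - w) t = pointMasses x' (y' - w') t := by
    intro t ht
    rcases eq_or_ne t (x i₀) with rfl | hne
    · rw [pointMasses_apply_of_injective hx, Pi.sub_apply, hi₀, sub_self,
        pointMasses_eq_zero fun j => (hdisj i₀ j).symm]
    · simp only [S, mem_erase, mem_union, mem_image, mem_univ, true_and, not_and, not_or,
        not_exists] at ht
      rw [pointMasses_eq_zero (ht hne).1, pointMasses_eq_zero (ht hne).2]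
  have hmoments : ∀ j ≤ d, ∑ i, (y - w) i * x i ^ j = ∑ i, (y' - w') i * x' i ^ j := by
    intro j hj
    simp only [Pi.sub_apply, sub_mul, sum_sub_distrib, momentMap_eq_iff.1 hy j hj,
      momentMap_eq_iff.1 hw j hj]
  have heq := pointMasses_eq_of_sum_mul_pow_eq S hS hoff hmoments
  constructor
  · funext i
    have hi := congrFun heq (x i)
    rw [pointMasses_apply_of_injective hx, pointMasses_eq_zero fun j => (hdisj i j).symm] at hi
    exact sub_eq_zero.1 hi
  · funext j
    have hj := congrFun heq (x' j)
    rw [pointMasses_apply_of_injective hx', pointMasses_eq_zero fun i => hdisj i j] at hj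
    exact sub_eq_zero.1 hj.symm

end MomentMap

section GoodPairs

variable (R : Type*) [Zero R] [Fintype R] [DecidableEq R] (k : ℕ)

def goodPairs : Finset ((Fin k → R) × (Fin k → R)) := {p | Injective p.1 ∧ ∀ i, p.2 i ≠ 0}

theorem card_goodPairs :
    #(goodPairs R k) = (Fintype.card R).descFactorial k * (Fintype.card R - 1) ^ k := by
  have hsplit : goodPairs R k = ({x | Injective x} : Finset (Fin k → R)) ×ˢ
      Fintype.piFinset fun _ => univ.erase 0 := by
    ext p
    simp [goodPairs, Fintype.mem_piFinset]
  rw [hsplit, card_product, Fintype.card_piFinset, card_erase_of_mem (mem_univ _), prod_const,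
    card_univ, card_univ, Fintype.card_fin, ← Fintype.card_subtype,
    Fintype.card_congr (Equiv.subtypeInjectiveEquivEmbedding (Fin k) R),
    Fintype.card_embedding_eq, Fintype.card_fin]

theorem tsub_pow_le_card_goodPairs : (Fintype.card R - k) ^ (2 * k) ≤ #(goodPairs R k) := by
  obtain rfl | hk := k.eq_zero_or_pos
  · simp [card_goodPairs]
  rw [card_goodPairs, two_mul, pow_add]
  gcongr
  · exact (Nat.pow_le_pow_left (by omega) k).trans (Nat.pow_sub_le_descFactorial _ k)
  · omega

end GoodPairs

section Collisions

variable {R : Type*} [CommRing R] [IsDomain R] [Fintype R] [DecidableEq R] {k d : ℕ}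

variable (R k d) in
def momentCollisions : Finset (((Fin k → R) × (Fin k → R)) × ((Fin k → R) × (Fin k → R))) :=
  {P ∈ goodPairs R k ×ˢ goodPairs R k | momentMap d P.1 = momentMap d P.2}

theorem card_filter_disjoint_momentCollisions_le (hk : 2 * k ≤ d + 2) (hk₀ : 0 < k) :
    #{P ∈ momentCollisions R k d | ¬∃ i j, P.1.1 i = P.2.1 j} ≤
      Fintype.card R ^ (2 * k + 1) := by
  let i₀ : Fin k := ⟨0, hk₀⟩
  calc _ ≤ #(univ : Finset ((Fin k → R) × (Fin k → R) × R)) := by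
        refine card_le_card_of_injOn (fun P => (P.1.1, P.2.1, P.1.2 i₀))
          (fun _ _ => mem_coe.2 (mem_univ _)) ?_
        rintro ⟨⟨x, y⟩, x', y'⟩ hP ⟨⟨u, w⟩, u', w'⟩ hQ heq
        simp only [coe_filter, momentCollisions, goodPairs, mem_filter, mem_product, mem_univ,
          true_and, not_exists, Set.mem_ofPred_eq, Prod.mk.injEq] at hP hQ heq
        obtain ⟨rfl, rfl, hi₀⟩ := heq
        obtain ⟨⟨⟨⟨hx, -⟩, hx', -⟩, hy⟩, hdisj⟩ := hP
        obtain ⟨rfl, rfl⟩ := eq_of_momentMap_eq_of_disjoint hk hx hx' hdisj hi₀ hy hQ.1.2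
        rfl
    _ = Fintype.card R ^ (2 * k + 1) := by
        simp only [card_univ, Fintype.card_prod, Fintype.card_fun, Fintype.card_fin]
        ring

theorem card_filter_overlap_momentCollisions_le (hk : 2 * k ≤ d + 2) :
    #{P ∈ momentCollisions R k d | ∃ i j, P.1.1 i = P.2.1 j} ≤
      k ^ k * Fintype.card R ^ (2 * k) := by
  calc _ ≤ #((univ : Finset (((Fin k → R) × (Fin k → R)) × (Fin k → Fin k))).image
          fun Pσ => (Pσ.1, Pσ.1.1 ∘ Pσ.2, Pσ.1.2 ∘ Pσ.2)) := by
        refine card_le_card ?_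
        rintro ⟨⟨x, y⟩, x', y'⟩ hP
        simp only [momentCollisions, goodPairs, mem_filter, mem_product, mem_univ,
          true_and] at hP
        obtain ⟨⟨⟨⟨hx, -⟩, hx', hy'⟩, h⟩, hov⟩ := hP
        obtain ⟨σ, rfl, rfl⟩ := exists_comp_eq_of_momentMap_eq hk hx hx' hy' hov h
        exact mem_image.2 ⟨((x, y), σ), mem_univ _, rfl⟩
    _ ≤ _ := card_image_le
    _ = k ^ k * Fintype.card R ^ (2 * k) := by
        simp only [card_univ, Fintype.card_prod, Fintype.card_fun, Fintype.card_fin]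
        ring

theorem card_momentCollisions_le (hk : 2 * k ≤ d + 2) (hk₀ : 0 < k) :
    #(momentCollisions R k d) ≤
      Fintype.card R ^ (2 * k + 1) + k ^ k * Fintype.card R ^ (2 * k) := by
  rw [← card_filter_add_card_filter_not (fun P => ∃ i j, P.1.1 i = P.2.1 j), add_comm]
  exact add_le_add (card_filter_disjoint_momentCollisions_le hk hk₀)
    (card_filter_overlap_momentCollisions_le hk)

end Collisions

theorem pow_succ_le_tsub_pow_succ_add (q m : ℕ) :
    ∀ n : ℕ, q ^ (n + 1) ≤ (q - m) ^ (n + 1) + (n + 1) * m * q ^ n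
  | 0 => by simpa only [zero_add, pow_one, pow_zero, one_mul, mul_one] using le_tsub_add
  | n + 1 =>
    calc q ^ (n + 2) = q * q ^ (n + 1) := by ring
      _ ≤ q * ((q - m) ^ (n + 1) + (n + 1) * m * q ^ n) := by
          gcongr; exact pow_succ_le_tsub_pow_succ_add q m n
      _ = q * (q - m) ^ (n + 1) + (n + 1) * m * q ^ (n + 1) := by ring
      _ ≤ (q - m + m) * (q - m) ^ (n + 1) + (n + 1) * m * q ^ (n + 1) := by
          gcongr; exact le_tsub_add
      _ = (q - m) ^ (n + 2) + m * (q - m) ^ (n + 1) + (n + 1) * m * q ^ (n + 1) := by ring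
      _ ≤ (q - m) ^ (n + 2) + m * q ^ (n + 1) + (n + 1) * m * q ^ (n + 1) := by
          gcongr; exact Nat.sub_le q m
      _ = (q - m) ^ (n + 2) + (n + 2) * m * q ^ (n + 1) := by ring

theorem tsub_mul_sq_le_mul_tsub {Q S T N : ℕ} (hN : N ^ 2 ≤ S * T) (hS : S ≤ Q) :
    (Q - S) * N ^ 2 ≤ Q * (Q * T - N ^ 2) :=
  calc (Q - S) * N ^ 2 ≤ (Q - S) * (S * T) := by gcongr
    _ = S * (Q * T - S * T) := by rw [← Nat.sub_mul]; ring
    _ ≤ Q * (Q * T - N ^ 2) := by gcongr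

theorem pow_mul_tsub_sq_le {q k d T N : ℕ} (hk : 2 * k = d + 2)
    (hT : T ≤ q ^ (2 * k + 1) + k ^ k * q ^ (2 * k)) (hN : (q - k) ^ (2 * k) ≤ N) :
    q ^ (d + 1) * T - N ^ 2 ≤ ((2 * d + 4) * k + k ^ k) * q ^ (2 * d + 3) := by
  have hQT : q ^ (d + 1) * T ≤ q ^ (2 * d + 4) + k ^ k * q ^ (2 * d + 3) :=
    calc q ^ (d + 1) * T ≤ q ^ (d + 1) * (q ^ (d + 3) + k ^ k * q ^ (d + 2)) := by
          gcongr
          rwa [show 2 * k + 1 = d + 3 by omega, hk] at hT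
      _ = q ^ (2 * d + 4) + k ^ k * q ^ (2 * d + 3) := by ring
  have hN₂ : (q - k) ^ (2 * d + 4) ≤ N ^ 2 := by
    rw [show 2 * d + 4 = 2 * k * 2 by omega, pow_mul]
    gcongr
  have hB : q ^ (2 * d + 4) ≤ (q - k) ^ (2 * d + 4) + (2 * d + 4) * k * q ^ (2 * d + 3) :=
    pow_succ_le_tsub_pow_succ_add q k (2 * d + 3)
  rw [add_mul]
  omega

theorem mul_add_pow_self_le {k d : ℕ} (hkd : k ≤ d) :
    (2 * d + 4) * k + k ^ k ≤ (d + 1) ^ (d + 2) := by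
  obtain rfl | hd := d.eq_zero_or_pos
  · simp [Nat.le_zero.1 hkd]
  have hkk : k ^ k ≤ (d + 1) ^ d :=
    (Nat.pow_self_mono hkd).trans (Nat.pow_le_pow_left d.le_succ d)
  have htwo : 2 ≤ (d + 1) ^ d :=
    (Nat.le_self_pow hd.ne' _).trans' (by omega)
  calc (2 * d + 4) * k + k ^ k ≤ (2 * d + 4) * d + (d + 1) ^ d := by gcongr
    _ ≤ (d + 1) ^ d * (d + 1) ^ 2 := by nlinarith [Nat.mul_le_mul_right (d ^ 2 + 2 * d) htwo]
    _ = (d + 1) ^ (d + 2) := by ring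

/-- Let `q` be a prime power (`F` the finite field with `q` elements),
`d` an even positive integer, and `k = d/2 + 1`.  Let `R_k^good` be the image under
`Z` of the set of good pairs and `N_g := (∏_{i=0}^{k-1}(q-i)) · (q-1)^k`.  Then
`(q^{d+1} - |R_k^good|) · N_g² ≤ (d+1)^{d+2} · q^{3d+4}`. -/
theorem stmt_17 (F : Type*) [Field F] [Fintype F] (d k : ℕ)
    (hd : Even d) (hdpos : 0 < d) (hk : k = d / 2 + 1) :
    (Fintype.card F ^ (d + 1) -
        Set.ncard {z : Fin (d + 1) → F | ∃ xy : (Fin k → F) × (Fin k → F),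
          Function.Injective xy.1 ∧ (∀ i, xy.2 i ≠ 0) ∧
          (fun j : Fin (d + 1) => ∑ i, xy.2 i * xy.1 i ^ (j : ℕ)) = z}) *
      ((∏ i ∈ Finset.range k, (Fintype.card F - i)) * (Fintype.card F - 1) ^ k) ^ 2 ≤
      (d + 1) ^ (d + 2) * Fintype.card F ^ (3 * d + 4) := by
  classical
  obtain ⟨r, hr⟩ := hd
  have hk₂ : 2 * k = d + 2 := by omega
  have himage : {z : Fin (d + 1) → F | ∃ xy : (Fin k → F) × (Fin k → F),
      Function.Injective xy.1 ∧ (∀ i, xy.2 i ≠ 0) ∧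
      (fun j : Fin (d + 1) => ∑ i, xy.2 i * xy.1 i ^ (j : ℕ)) = z} =
      (goodPairs F k).image (momentMap d) := by
    ext z
    simp only [goodPairs, coe_image, coe_filter, mem_univ, true_and, Set.mem_image,
      Set.mem_ofPred_eq, and_assoc]
    rfl
  rw [himage, Set.ncard_coe_finset, ← Nat.descFactorial_eq_prod_range, ← card_goodPairs]
  set q := Fintype.card F
  calc _ ≤ q ^ (d + 1) * (q ^ (d + 1) * #(momentCollisions F k d) - #(goodPairs F k) ^ 2) :=
        tsub_mul_sq_le_mul_tsub (card_sq_le_card_image_mul_card_filter_eq _ _)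
          ((card_le_univ _).trans_eq (by simp [q]))
    _ ≤ q ^ (d + 1) * (((2 * d + 4) * k + k ^ k) * q ^ (2 * d + 3)) := by
        gcongr
        exact pow_mul_tsub_sq_le hk₂ (card_momentCollisions_le (by omega) (by omega))
          (tsub_pow_le_card_goodPairs F k)
    _ = ((2 * d + 4) * k + k ^ k) * q ^ (3 * d + 4) := by ring
    _ ≤ (d + 1) ^ (d + 2) * q ^ (3 * d + 4) := by
        gcongr
        exact mul_add_pow_self_le (by omega)
end

section
/- Let q be a prime power, let d be an even positive integer, let k = d/2 + 1, and let α > 0 be a real number. Then α² · |{z ∈ F_q^{d+1} : |Z^{-1}(z)| ≤ q - α √q d^k}| ≤ q^{d+1}, where |Z^{-1}(z)| denotes the number of pairs (x,y) ∈ F_q^k × F_q^k with Z(x,y) = z and the inequality |Z^{-1}(z)| ≤ q - α √q d^k is read in the real numbers. -/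
/-!
Write `N z = |Z⁻¹(z)|`. Then `∑ N z = q ^ (2k) = q · q ^ (d + 1)`, while `∑ (N z)²` counts pairs
of points with the same image; concatenating the two points (and negating the second weight
vector) these become pairs `(X, C) ∈ F^(d+2) × F^(d+2)` whose power moments `∑ Cᵢ Xᵢ^j`,
`j ≤ d`, all vanish. If `X` takes at least `d + 1` values, it is injective off one index, so by
Vandermonde `C` is determined by `X` and one coordinate: at most `q ^ (d + 3)` pairs. Otherwise
Vandermonde on the values of `X` makes `C` sum to zero on every level set of `X`, and such pairs
are encoded by a labelling of the level sets by `Fin d` together with one vector of `F^(d+2)`: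
at most `d ^ (d + 2) q ^ (d + 2)` pairs. Hence `∑ (q - N z)² ≤ d ^ (d + 2) q ^ (d + 2)`, and
Chebyshev's inequality at the threshold `α √q d ^ k`, whose square is `α² q d ^ (d + 2)`, gives
the bound.
-/

open Finset
open scoped Classical

section LevelSets

variable {ι β : Type*}

lemma exists_injOn_erase_of_card_le_card_image_add_one [Fintype ι] [Nonempty ι]
    {X : ι → β} (h : Fintype.card ι ≤ #(univ.image X) + 1) :
    ∃ i₀, Set.InjOn X ↑(univ.erase i₀ : Finset ι) := by
  by_cases hX : Function.Injective X
  · exact ⟨Classical.arbitrary ι, hX.injOn⟩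
  obtain ⟨a, b, hab, hne⟩ := Function.not_injective_iff.mp hX
  have himage : (univ.erase a).image X = univ.image X := by
    refine (image_subset_image (erase_subset _ _)).antisymm fun v hv => ?_
    obtain ⟨i, -, rfl⟩ := mem_image.mp hv
    by_cases hi : i = a
    · exact mem_image.mpr ⟨b, mem_erase.mpr ⟨hne.symm, mem_univ b⟩, by rw [hi, hab]⟩
    · exact mem_image_of_mem X (mem_erase.mpr ⟨hi, mem_univ i⟩)
  refine ⟨a, injOn_of_card_image_eq (le_antisymm card_image_le ?_)⟩
  rw [himage, card_erase_of_mem (mem_univ a), card_univ]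
  omega

noncomputable def levelRep (f : ι → β) (i : ι) : ι :=
  @Classical.epsilon ι ⟨i⟩ fun j => f j = f i

lemma apply_levelRep (f : ι → β) (i : ι) : f (levelRep f i) = f i :=
  Classical.epsilon_spec (p := fun j => f j = f i) ⟨i, rfl⟩

lemma levelRep_congr {f : ι → β} {i j : ι} (h : f i = f j) : levelRep f i = levelRep f j := by
  unfold levelRep
  rw [h]

lemma levelRep_levelRep (f : ι → β) (i : ι) : levelRep f (levelRep f i) = levelRep f i :=
  levelRep_congr (apply_levelRep f i)

lemma exists_fin_eq_iff_of_card_image_le [Fintype ι] (X : ι → β) {d : ℕ} (h : #(univ.image X) ≤ d) :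
    ∃ f : ι → Fin d, ∀ a b, f a = f b ↔ X a = X b := by
  refine ⟨fun i => Fin.castLE h ((univ.image X).equivFin ⟨X i, mem_image_of_mem X (mem_univ i)⟩),
    fun a b => ?_⟩
  simp [Fin.castLE_inj]

variable [Fintype ι] [DecidableEq ι] {R : Type*} [AddCommGroup R]

/-- Inverse of the encoding of `(X, C)` by a labelling `f` of the level sets of `X` and the vector
that holds `X` at the representative of each level set and `C` elsewhere; the value of `C` at a
representative is recovered from the vanishing of `C`'s sum over the level set. -/
noncomputable def decodeLevelSets {d : ℕ} (f : ι → Fin d) (v : ι → R) : (ι → R) × (ι → R) :=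
  (fun i => v (levelRep f i),
    fun i => if levelRep f i = i then -∑ j ∈ ({j | f j = f i} : Finset ι).erase i, v j else v i)

lemma card_sum_fiber_eq_zero_with_few_values_le [Fintype R] (d : ℕ) :
    #{XC : (ι → R) × (ι → R) |
        #(univ.image XC.1) ≤ d ∧ ∀ i, ∑ j with XC.1 j = XC.1 i, XC.2 j = 0} ≤
      d ^ Fintype.card ι * Fintype.card R ^ Fintype.card ι := by
  calc _ ≤ #(univ : Finset ((ι → Fin d) × (ι → R))) :=
        card_le_card_of_surjOn (fun p => decodeLevelSets p.1 p.2) ?_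
    _ = _ := by simp
  rintro ⟨X, C⟩ hXC
  simp only [coe_filter, mem_univ, true_and, Set.mem_ofPred_eq] at hXC
  obtain ⟨hX, hC⟩ := hXC
  obtain ⟨f, hf⟩ := exists_fin_eq_iff_of_card_image_le X hX
  refine ⟨(f, fun i => if levelRep f i = i then X i else C i), by simp, ?_⟩
  have hrep : ∀ i, X (levelRep f i) = X i := fun i => (hf _ _).1 (apply_levelRep f i)
  refine Prod.ext (funext fun i => ?_) (funext fun i => ?_)
  · simp [decodeLevelSets, levelRep_levelRep, hrep]
  · by_cases hi : levelRep f i = i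
    · have hothers : ∀ j ∈ ({j | f j = f i} : Finset ι).erase i,
          (if levelRep f j = j then X j else C j) = C j := by
        intro j hj
        obtain ⟨hji, hj⟩ := mem_erase.mp hj
        rw [if_neg (by rw [levelRep_congr (mem_filter.mp hj).2, hi]; exact hji.symm)]
      have hblock := add_sum_erase _ C (by simp : i ∈ ({j | f j = f i} : Finset ι))
      simp only [hf, hC i] at hblock
      simp only [decodeLevelSets, hi, if_true]
      rw [sum_congr rfl hothers]
      simp only [hf]
      exact (eq_neg_of_add_eq_zero_left hblock).symm
    · simp [decodeLevelSets, hi]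

end LevelSets

lemma sum_card_fiber_sq {α β : Type*} [Fintype α] [Fintype β] [DecidableEq β] (g : α → β) :
    ∑ b, #{a | g a = b} ^ 2 = #{p : α × α | g p.1 = g p.2} := by
  rw [card_eq_sum_card_fiberwise (f := fun p : α × α => g p.1) (t := univ) fun _ _ => mem_univ _]
  refine sum_congr rfl fun b _ => ?_
  rw [sq, ← card_product]
  congr 1
  ext ⟨a, a'⟩
  simp only [mem_product, mem_filter, mem_univ, true_and]
  grind

section Moments

variable {F ι : Type*} [CommRing F]

lemma eq_zero_of_sum_mul_pow_eq_zero [IsDomain F] {s : Finset ι} {x c : ι → F} {d : ℕ}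
    (hs : #s ≤ d + 1) (hx : Set.InjOn x s)
    (h : ∀ j : Fin (d + 1), ∑ i ∈ s, c i * x i ^ (j : ℕ) = 0) :
    ∀ i ∈ s, c i = 0 := by
  let e : Fin #s ≃ s := s.equivFin.symm
  have hzero : (fun a => c (e a)) = 0 := by
    refine Matrix.eq_zero_of_forall_pow_sum_mul_pow_eq_zero
      (fun a b hab => e.injective (Subtype.ext (hx (e a).2 (e b).2 hab))) fun j => ?_
    have hj := h ⟨j, by omega⟩
    rwa [← sum_coe_sort s, ← e.sum_comp] at hj
  intro i hi
  simpa [e] using congrFun hzero (e.symm ⟨i, hi⟩)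

/-- `moments d x y = Z(x, y)`. -/
def moments [Fintype ι] (d : ℕ) (x y : ι → F) : Fin (d + 1) → F :=
  fun j => ∑ i, y i * x i ^ (j : ℕ)

lemma moments_sumElim {ι' : Type*} [Fintype ι] [Fintype ι'] (d : ℕ) (x y : ι → F)
    (x' y' : ι' → F) :
    moments d (Sum.elim x x') (Sum.elim y y') = moments d x y + moments d x' y' := by
  funext j
  simp [moments, Fintype.sum_sum_type]

lemma moments_neg [Fintype ι] (d : ℕ) (x y : ι → F) : moments d x (-y) = -moments d x y := by
  funext j
  simp [moments]

lemma sum_fiber_eq_zero_of_moments_eq_zero [IsDomain F] [Fintype ι] {X C : ι → F} {d : ℕ}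
    (hX : #(univ.image X) ≤ d + 1) (h : moments d X C = 0) (i : ι) :
    ∑ j with X j = X i, C j = 0 := by
  refine eq_zero_of_sum_mul_pow_eq_zero (x := id) (c := fun v => ∑ j with X j = v, C j) hX
    (Set.injOn_id _) (fun n => ?_) (X i) (mem_image_of_mem X (mem_univ i))
  have hn : ∑ j, C j * X j ^ (n : ℕ) = 0 := congrFun h n
  rw [← hn,
    ← sum_fiberwise_of_maps_to (g := X) (fun j _ => mem_image_of_mem X (mem_univ j))]
  refine sum_congr rfl fun v _ => ?_
  rw [sum_mul]
  exact sum_congr rfl fun j hj => by rw [(mem_filter.mp hj).2]; rfl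

lemma eq_of_moments_eq_of_apply_eq [IsDomain F] [Fintype ι] {d : ℕ} {X C C' : ι → F} {i₀ : ι}
    (hι : Fintype.card ι ≤ d + 2) (hX : Set.InjOn X ↑(univ.erase i₀ : Finset ι))
    (hC : moments d X C = moments d X C') (h₀ : C i₀ = C' i₀) : C = C' := by
  have hzero := eq_zero_of_sum_mul_pow_eq_zero (d := d) (s := univ.erase i₀) (c := C - C')
    (by rw [card_erase_of_mem (mem_univ _), card_univ]; omega) hX fun j => ?_
  · funext i
    by_cases hi : i = i₀
    · rw [hi, h₀]
    · exact sub_eq_zero.mp (hzero i (by simp [hi]))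
  · have hj : ∑ i, C i * X i ^ (j : ℕ) = ∑ i, C' i * X i ^ (j : ℕ) := congrFun hC j
    rw [sum_erase _ (by simp [h₀])]
    simp only [Pi.sub_apply, sub_mul, sum_sub_distrib, hj, sub_self]

lemma card_moments_eq_zero_with_many_values_le [IsDomain F] [Fintype F] [Fintype ι] [DecidableEq ι]
    {d : ℕ} (hι : Fintype.card ι ≤ d + 2) :
    #{XC : (ι → F) × (ι → F) | d + 1 ≤ #(univ.image XC.1) ∧ moments d XC.1 XC.2 = 0} ≤
      Fintype.card F ^ Fintype.card ι * Fintype.card F := by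
  calc _ ≤ Fintype.card F * #(univ : Finset (ι → F)) :=
        card_le_mul_card_image_of_maps_to (f := Prod.fst) (fun _ _ => mem_univ _) _
          fun X _ => ?_
    _ = _ := by simp [mul_comm]
  by_cases hX : d + 1 ≤ #(univ.image X)
  · have : Nonempty ι := by
      by_contra h
      rw [not_nonempty_iff] at h
      simp at hX
    obtain ⟨i₀, hi₀⟩ := exists_injOn_erase_of_card_le_card_image_add_one (X := X) (by omega)
    calc _ ≤ #(univ : Finset F) :=
          card_le_card_of_injOn (fun XC => XC.2 i₀) (fun _ _ => mem_coe.mpr (mem_univ _)) ?_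
      _ = _ := card_univ
    rintro ⟨X₁, C₁⟩ h₁ ⟨X₂, C₂⟩ h₂ h
    simp only [mem_coe, mem_filter, mem_univ, true_and] at h₁ h₂
    obtain ⟨⟨-, hC₁⟩, rfl⟩ := h₁
    obtain ⟨⟨-, hC₂⟩, rfl⟩ := h₂
    rw [eq_of_moments_eq_of_apply_eq hι hi₀ (hC₁.trans hC₂.symm) h]
  · refine (card_eq_zero.mpr (filter_eq_empty_iff.mpr fun XC hXC => ?_)).le.trans (Nat.zero_le _)
    simp only [mem_filter, mem_univ, true_and] at hXC
    rintro rfl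
    exact hX hXC.1

theorem card_moments_eq_zero_le [IsDomain F] [Fintype F] [Fintype ι] [DecidableEq ι] {d : ℕ}
    (hι : Fintype.card ι = d + 2) :
    #{XC : (ι → F) × (ι → F) | moments d XC.1 XC.2 = 0} ≤
      Fintype.card F ^ (d + 2) * Fintype.card F + d ^ (d + 2) * Fintype.card F ^ (d + 2) := by
  rw [← card_filter_add_card_filter_not (p := fun XC => d + 1 ≤ #(univ.image XC.1)),
    filter_filter, filter_filter, ← hι]
  gcongr
  · calc _ ≤ #{XC : (ι → F) × (ι → F) | d + 1 ≤ #(univ.image XC.1) ∧ moments d XC.1 XC.2 = 0} :=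
          card_le_card fun XC hXC => by
            simp only [mem_filter, mem_univ, true_and] at hXC ⊢
            exact hXC.symm
      _ ≤ _ := card_moments_eq_zero_with_many_values_le hι.le
  · calc _ ≤ #{XC : (ι → F) × (ι → F) |
            #(univ.image XC.1) ≤ d ∧ ∀ i, ∑ j with XC.1 j = XC.1 i, XC.2 j = 0} :=
          card_le_card fun XC hXC => by
            simp only [mem_filter, mem_univ, true_and, not_le] at hXC ⊢
            exact ⟨by omega, sum_fiber_eq_zero_of_moments_eq_zero (by omega) hXC.1⟩
      _ ≤ _ := card_sum_fiber_eq_zero_with_few_values_le d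

lemma card_moments_eq_eq_card_moments_sumElim {ι' : Type*} [Fintype F] [Fintype ι] [DecidableEq ι]
    [Fintype ι'] [DecidableEq ι'] (d : ℕ) :
    #{pp : ((ι → F) × (ι → F)) × ((ι' → F) × (ι' → F)) |
        moments d pp.1.1 pp.1.2 = moments d pp.2.1 pp.2.2} =
      #{XC : (ι ⊕ ι' → F) × (ι ⊕ ι' → F) | moments d XC.1 XC.2 = 0} := by
  refine card_nbij' (fun pp => (Sum.elim pp.1.1 pp.2.1, Sum.elim pp.1.2 (-pp.2.2)))
    (fun XC => ((XC.1 ∘ Sum.inl, XC.2 ∘ Sum.inl), (XC.1 ∘ Sum.inr, -(XC.2 ∘ Sum.inr))))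
    ?_ ?_ ?_ ?_
  · intro pp hpp
    simp only [coe_filter, mem_univ, true_and, Set.mem_ofPred_eq] at hpp ⊢
    rw [moments_sumElim, moments_neg, hpp, add_neg_cancel]
  · intro XC hXC
    simp only [coe_filter, mem_univ, true_and, Set.mem_ofPred_eq] at hXC ⊢
    rw [moments_neg, ← add_eq_zero_iff_eq_neg, ← moments_sumElim, Sum.elim_comp_inl_inr,
      Sum.elim_comp_inl_inr, hXC]
  · intro pp _
    simp
  · intro XC _
    simp

lemma sum_card_moments_eq [Fintype F] [Fintype ι] [DecidableEq ι] (d : ℕ) :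
    ∑ z : Fin (d + 1) → F, #{p : (ι → F) × (ι → F) | moments d p.1 p.2 = z} =
      Fintype.card F ^ (Fintype.card ι + Fintype.card ι) := by
  rw [← card_eq_sum_card_fiberwise fun _ _ => mem_univ _]
  simp [pow_add]

lemma sum_card_moments_sq_le [IsDomain F] [Fintype F] [Fintype ι] [DecidableEq ι] {d : ℕ}
    (hι : Fintype.card ι + Fintype.card ι = d + 2) :
    ∑ z : Fin (d + 1) → F, #{p : (ι → F) × (ι → F) | moments d p.1 p.2 = z} ^ 2 ≤
      Fintype.card F ^ (d + 2) * Fintype.card F + d ^ (d + 2) * Fintype.card F ^ (d + 2) := by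
  rw [sum_card_fiber_sq fun p : (ι → F) × (ι → F) => moments d p.1 p.2,
    card_moments_eq_eq_card_moments_sumElim]
  exact card_moments_eq_zero_le (by simp [hι])

end Moments

lemma card_filter_mul_sq_le {α : Type*} {s : Finset α} {N : α → ℕ} {m B : ℕ} {t : ℝ}
    (ht : 0 ≤ t) (h₁ : ∑ a ∈ s, N a = m * #s) (h₂ : ∑ a ∈ s, N a ^ 2 ≤ m ^ 2 * #s + B) :
    #{a ∈ s | (N a : ℝ) ≤ m - t} * t ^ 2 ≤ B := by
  have h₁' : ∑ a ∈ s, (N a : ℝ) = m * #s := by exact_mod_cast h₁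
  have h₂' : ∑ a ∈ s, (N a : ℝ) ^ 2 ≤ m ^ 2 * #s + B := by exact_mod_cast h₂
  have hvariance : ∑ a ∈ s, ((m : ℝ) - N a) ^ 2 ≤ B := by
    have hexpand : ∑ a ∈ s, ((m : ℝ) - N a) ^ 2 =
        m ^ 2 * #s - 2 * m * ∑ a ∈ s, (N a : ℝ) + ∑ a ∈ s, (N a : ℝ) ^ 2 := by
      simp only [sub_sq, sum_add_distrib, sum_sub_distrib, ← mul_sum, sum_const, nsmul_eq_mul]
      ring
    rw [hexpand, h₁']
    linarith
  calc #{a ∈ s | (N a : ℝ) ≤ m - t} * t ^ 2 = ∑ a ∈ s with (N a : ℝ) ≤ m - t, t ^ 2 := by simp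
    _ ≤ ∑ a ∈ s with (N a : ℝ) ≤ m - t, ((m : ℝ) - N a) ^ 2 :=
        sum_le_sum fun a ha => pow_le_pow_left₀ ht (by linarith [(mem_filter.mp ha).2]) 2
    _ ≤ ∑ a ∈ s, ((m : ℝ) - N a) ^ 2 :=
        sum_le_sum_of_subset_of_nonneg (filter_subset _ _) fun _ _ _ => sq_nonneg _
    _ ≤ B := hvariance

/-- Let `q` be a prime power (`F` the finite field with `q` elements),
`d` an even positive integer, `k = d/2 + 1`, and `α > 0` a real number.  Then
`α² · |{z ∈ F_q^{d+1} : |Z⁻¹(z)| ≤ q - α √q d^k}| ≤ q^{d+1}`, where the inner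
inequality is read in the real numbers. -/
theorem stmt_18 (F : Type*) [Field F] [Fintype F] (d k : ℕ)
    (hd : Even d) (hdpos : 0 < d) (hk : k = d / 2 + 1)
    (α : ℝ) (hα : 0 < α) :
    α ^ 2 *
      (Set.ncard {z : Fin (d + 1) → F |
        (Nat.card {xy : (Fin k → F) × (Fin k → F) //
            (fun j : Fin (d + 1) => ∑ i, xy.2 i * xy.1 i ^ (j : ℕ)) = z} : ℝ) ≤
          (Fintype.card F : ℝ) - α * Real.sqrt (Fintype.card F) * (d : ℝ) ^ k} : ℝ) ≤
      (Fintype.card F : ℝ) ^ (d + 1) := by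
  set q := Fintype.card F
  have h2k : k + k = d + 2 := by obtain ⟨m, rfl⟩ := hd; omega
  let N (z : Fin (d + 1) → F) : ℕ := #{p : (Fin k → F) × (Fin k → F) | moments d p.1 p.2 = z}
  have hset : {z : Fin (d + 1) → F |
      (Nat.card {xy : (Fin k → F) × (Fin k → F) //
          (fun j : Fin (d + 1) => ∑ i, xy.2 i * xy.1 i ^ (j : ℕ)) = z} : ℝ) ≤
        q - α * √q * d ^ k} = ↑({z | (N z : ℝ) ≤ q - α * √q * d ^ k} : Finset _) := by
    ext z
    simp only [Set.mem_ofPred_eq, coe_filter, mem_univ, true_and, Nat.card_eq_fintype_card,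
      Fintype.card_subtype]
    rfl
  have hcard : #(univ : Finset (Fin (d + 1) → F)) = q ^ (d + 1) := by simp [q]
  have hsum : ∑ z, N z = q * #(univ : Finset (Fin (d + 1) → F)) := by
    rw [sum_card_moments_eq, hcard, Fintype.card_fin, h2k, pow_succ']
  have hsum_sq : ∑ z, N z ^ 2 ≤
      q ^ 2 * #(univ : Finset (Fin (d + 1) → F)) + d ^ (d + 2) * q ^ (d + 2) := by
    rw [hcard]
    exact (sum_card_moments_sq_le (by simp [h2k])).trans_eq (by ring)
  have hcheb := card_filter_mul_sq_le (s := univ) (t := α * √q * d ^ k) (by positivity)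
    hsum hsum_sq
  have ht : (α * √q * d ^ k) ^ 2 = α ^ 2 * q * d ^ (d + 2) := by
    rw [mul_pow, mul_pow, Real.sq_sqrt (Nat.cast_nonneg _), ← pow_mul, mul_two, h2k]
  have hpos : (0 : ℝ) < q * d ^ (d + 2) := by have := Fintype.card_pos (α := F); positivity
  rw [ht] at hcheb
  push_cast at hcheb
  rw [hset, Set.ncard_coe_finset]
  exact le_of_mul_le_mul_right ((le_of_eq (by ring)).trans (hcheb.trans (le_of_eq (by ring)))) hpos
end
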